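/- arXiv:2502.09907 — 4 statements merged into one kernel-verified Lean document; each statement's English description precedes it below -/
import Mathlib

section
/- For every probability measure F on [0,1] (the value distribution) and every bidding strategy s (a Markov kernel from [0,1] to [0,1]) such that the induced bid distribution P_{s,F} is absolutely continuous with respect to Lebesgue measure, the worst-case regret satisfies: sup over all probability measures H on [0,1] of Reg_F(s,H) equals sup over h in [0,1] of Reg_F(s,δ_h), which in turn equals sup over h in [0,1] of ( E_{v∼F}[(v−h)·1{v≥h}] − U_F(s,δ_h) ). -/
open MeasureTheory ProbabilityTheory Set

noncomputable section

namespace FPA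

/-- The unit interval `[0,1] ⊆ ℝ`. -/
def Iu : Set ℝ := Set.Icc 0 1

/-- `μ` is a probability measure on `[0,1]`. -/
def IsProbOn (μ : Measure ℝ) : Prop := IsProbabilityMeasure μ ∧ μ Iu = 1

/-- A bidding strategy: a Markov kernel from `[0,1]` to `[0,1]`. -/
def IsStrategy (s : Kernel ℝ ℝ) : Prop := IsMarkovKernel s ∧ ∀ v : ℝ, s v Iu = 1

/-- The buyer's utility `u(b,h;v) = (v−b)·1{b ≥ h}`. -/
def util (b h v : ℝ) : ℝ := (v - b) * (if h ≤ b then 1 else 0)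

/-- Expected utility `U_F(s,H)`. -/
def eUtil (F : Measure ℝ) (s : Kernel ℝ ℝ) (H : Measure ℝ) : ℝ :=
  ∫ v, ∫ h, ∫ b, util b h v ∂(s v) ∂H ∂F

/-- Regret `Reg_F(s,H) = sup_{s'∈S} U_F(s',H) − U_F(s,H)`. -/
def regret (F : Measure ℝ) (s : Kernel ℝ ℝ) (H : Measure ℝ) : ℝ :=
  (⨆ s' : {k : Kernel ℝ ℝ // IsStrategy k}, eUtil F s'.1 H) - eUtil F s H

/-- Induced bid distribution `P_{s,F}`. -/
def bidDist (F : Measure ℝ) (s : Kernel ℝ ℝ) : Measure ℝ := F.bind (fun v => s v)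

/-- CDF of a measure on `[0,1]`: `F(x) = F([0,x])`. -/
def cdf01 (F : Measure ℝ) (x : ℝ) : ℝ := (F (Set.Iic x)).toReal

/-- Generalized inverse `F⁻(t) = inf {x ∈ [0,1] : F(x) ≥ t}`. -/
def qinv (F : Measure ℝ) (t : ℝ) : ℝ := sInf {x | x ∈ Iu ∧ t ≤ cdf01 F x}

/-- Full-information benchmark against a deterministic highest competing bid `h`. -/
def bench (F : Measure ℝ) (h : ℝ) : ℝ := ∫ v, (v - h) * (if h ≤ v then 1 else 0) ∂F

/-- Full-information regret `R_F(s,H)`. -/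
def fregret (F : Measure ℝ) (s : Kernel ℝ ℝ) (H : Measure ℝ) : ℝ :=
  (∫ h, bench F h ∂H) - eUtil F s H

/-- Absolute continuity of a function on `[0,1]` (FTC characterization). -/
def AbsContOn01 (f : ℝ → ℝ) : Prop :=
  ∃ g : ℝ → ℝ, IntervalIntegrable g volume 0 1 ∧
    ∀ x ∈ Iu, f x = f 0 + ∫ t in (0:ℝ)..x, g t

/-- The set of quantiles corresponding to value `v`: `Y(v) = {y ∈ [0,1] : F⁻(y) = v}`. -/
def Yset (F : Measure ℝ) (v : ℝ) : Set ℝ := {y | y ∈ Iu ∧ qinv F y = v}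

/-- Uniform distribution on a set `A ⊆ ℝ`. -/
def unifOn (A : Set ℝ) : Measure ℝ := (volume A)⁻¹ • volume.restrict A

/-- `s` is the bidding strategy corresponding to the quantile-based bidding strategy `Q`:
it bids `Q(F(v))` when `F({v}) = 0`, and the pushforward under `Q` of the uniform
distribution on `Y(v)` when `F({v}) > 0`. -/
def IsQuantileStrategy (F : Measure ℝ) (Q : ℝ → ℝ) (s : Kernel ℝ ℝ) : Prop :=
  IsStrategy s ∧ ∀ v ∈ Iu,
    s v = if F {v} = 0 then Measure.dirac (Q (cdf01 F v)) else (unifOn (Yset F v)).map Q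

/-- The candidate worst-case highest-competing-bid CDF
`H*(x) = exp(−∫_{(Q*)⁻¹(x)}^1 dt/(1−F(Q*(t))))`. -/
def Hstar (F : Measure ℝ) (Q : ℝ → ℝ) (x : ℝ) : ℝ :=
  Real.exp (-(∫ t in (Function.invFunOn Q Iu x)..(1:ℝ), 1 / (1 - cdf01 F (Q t))))


/-!
Since `u(b,h;v) ≤ (v−h)⁺` pointwise, no strategy earns more against `H` than the full-information
benchmark `∫ E_F[(v−h)⁺] dH`, and against a point mass `δ_h` this benchmark is attained by
bidding `h` exactly when `v ≥ h`. As `U_F(s,H)` is the `H`-average of `U_F(s,δ_h)` (Fubini), the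
regret against `H` is at most the `H`-average of the regrets against point masses; point masses
being admissible themselves, the two suprema agree.
-/

lemma zero_mem_Iu : (0 : ℝ) ∈ Iu := ⟨le_rfl, zero_le_one⟩

lemma IsProbOn.ae_mem_Iu {μ : Measure ℝ} (hμ : IsProbOn μ) : ∀ᵐ x ∂μ, x ∈ Iu := by
  have := hμ.1
  exact (ae_mem_iff_measure_eq (s := Iu) measurableSet_Icc.nullMeasurableSet).2
    (by rw [hμ.2, measure_univ])

lemma IsProbOn.integrable_of_abs_le {μ : Measure ℝ} (hμ : IsProbOn μ) {f : ℝ → ℝ}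
    (hf : AEStronglyMeasurable f μ) {C : ℝ} (hC : ∀ x ∈ Iu, |f x| ≤ C) : Integrable f μ :=
  have := hμ.1
  .of_bound hf C (hμ.ae_mem_Iu.mono fun x hx => (Real.norm_eq_abs _).trans_le (hC x hx))

lemma IsProbOn.abs_integral_le {μ : Measure ℝ} (hμ : IsProbOn μ) {f : ℝ → ℝ} {C : ℝ}
    (hC : ∀ x ∈ Iu, |f x| ≤ C) : |∫ x, f x ∂μ| ≤ C := by
  have := hμ.1
  simpa using norm_integral_le_of_norm_le_const
    (hμ.ae_mem_Iu.mono fun x hx => (Real.norm_eq_abs (f x)).trans_le (hC x hx))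

lemma isProbOn_dirac {h : ℝ} (hh : h ∈ Iu) : IsProbOn (Measure.dirac h) :=
  ⟨inferInstance, Measure.dirac_apply_of_mem hh⟩

lemma IsStrategy.isProbOn {k : Kernel ℝ ℝ} (hk : IsStrategy k) (v : ℝ) : IsProbOn (k v) :=
  ⟨hk.1.isProbabilityMeasure v, hk.2 v⟩

lemma util_le_max (b h v : ℝ) : util b h v ≤ max (v - h) 0 := by
  unfold util
  split_ifs with hb
  · rw [mul_one]
    exact le_max_of_le_left (by linarith)
  · simp

lemma abs_util_le_one {b v : ℝ} (hb : b ∈ Iu) (hv : v ∈ Iu) (h : ℝ) : |util b h v| ≤ 1 := by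
  unfold util
  split_ifs
  · simpa using abs_sub_le_iff.2 ⟨by linarith [hv.2, hb.1], by linarith [hv.1, hb.2]⟩
  · simp

lemma abs_max_sub_le_one {h v : ℝ} (hh : h ∈ Iu) (hv : v ∈ Iu) : |max (v - h) 0| ≤ 1 := by
  rw [abs_of_nonneg (le_max_right _ _)]
  exact max_le (by linarith [hv.2, hh.1]) zero_le_one

lemma measurable_util : Measurable fun q : (ℝ × ℝ) × ℝ => util q.2 q.1.2 q.1.1 := by
  unfold util
  exact ((measurable_fst.comp measurable_fst).sub measurable_snd).mul
    (Measurable.ite (measurableSet_le (measurable_snd.comp measurable_fst) measurable_snd)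
      measurable_const measurable_const)

lemma bench_eq_integral_max (F : Measure ℝ) (h : ℝ) : bench F h = ∫ v, max (v - h) 0 ∂F := by
  unfold bench
  congr 1 with v
  split_ifs with hv
  · simp [hv]
  · simp [(not_le.1 hv).le]

lemma stronglyMeasurable_bench (F : Measure ℝ) [SFinite F] : StronglyMeasurable (bench F) := by
  have : Measurable fun p : ℝ × ℝ => (p.2 - p.1) * (if p.1 ≤ p.2 then 1 else 0 : ℝ) :=
    (measurable_snd.sub measurable_fst).mul
      (Measurable.ite (measurableSet_le measurable_fst measurable_snd)
        measurable_const measurable_const)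
  exact this.stronglyMeasurable.integral_prod_right'

lemma abs_bench_le_one {F : Measure ℝ} (hF : IsProbOn F) {h : ℝ} (hh : h ∈ Iu) :
    |bench F h| ≤ 1 := by
  rw [bench_eq_integral_max]
  exact hF.abs_integral_le fun v hv => abs_max_sub_le_one hh hv

def bidUtil (k : Kernel ℝ ℝ) (v h : ℝ) : ℝ := ∫ b, util b h v ∂(k v)

section BidUtil

variable {k : Kernel ℝ ℝ}

lemma stronglyMeasurable_bidUtil (k : Kernel ℝ ℝ) [IsSFiniteKernel k] :
    StronglyMeasurable fun p : ℝ × ℝ => bidUtil k p.1 p.2 := by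
  unfold bidUtil
  simpa only [Kernel.comap_apply] using
    measurable_util.stronglyMeasurable.integral_kernel_prod_right'
      (κ := k.comap Prod.fst measurable_fst)

lemma abs_bidUtil_le_one (hk : IsStrategy k) {v : ℝ} (hv : v ∈ Iu) (h : ℝ) :
    |bidUtil k v h| ≤ 1 :=
  (hk.isProbOn v).abs_integral_le fun _ hb => abs_util_le_one hb hv h

lemma bidUtil_le_max (hk : IsStrategy k) {v : ℝ} (hv : v ∈ Iu) (h : ℝ) :
    bidUtil k v h ≤ max (v - h) 0 := by
  have := hk.1
  have hint : Integrable (fun b => util b h v) (k v) :=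
    (hk.isProbOn v).integrable_of_abs_le
      (measurable_util.comp (measurable_prodMk_left (x := (v, h)))).aestronglyMeasurable
      fun _ hb => abs_util_le_one hb hv h
  calc bidUtil k v h ≤ ∫ _, max (v - h) 0 ∂(k v) :=
        integral_mono hint (integrable_const _) fun b => util_le_max b h v
    _ = max (v - h) 0 := by simp

lemma integrable_bidUtil {F : Measure ℝ} (hF : IsProbOn F) (hk : IsStrategy k) (h : ℝ) :
    Integrable (fun v => bidUtil k v h) F :=
  have := hk.1
  hF.integrable_of_abs_le ((stronglyMeasurable_bidUtil k).comp_measurable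
    (measurable_id.prodMk measurable_const)).aestronglyMeasurable
    fun _ hv => abs_bidUtil_le_one hk hv h

end BidUtil

section ExpectedUtility

variable {F : Measure ℝ} {k : Kernel ℝ ℝ}

lemma eUtil_dirac (h : ℝ) :
    eUtil F k (Measure.dirac h) = ∫ v, bidUtil k v h ∂F := by
  simp only [eUtil, integral_dirac, bidUtil]

lemma stronglyMeasurable_eUtil_dirac [SFinite F] [IsSFiniteKernel k] :
    StronglyMeasurable fun h => eUtil F k (Measure.dirac h) := by
  simp only [eUtil_dirac]
  exact ((stronglyMeasurable_bidUtil k).comp_measurable measurable_swap).integral_prod_right'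

lemma abs_eUtil_dirac_le_one (hF : IsProbOn F) (hk : IsStrategy k) (h : ℝ) :
    |eUtil F k (Measure.dirac h)| ≤ 1 := by
  rw [eUtil_dirac]
  exact hF.abs_integral_le fun _ hv => abs_bidUtil_le_one hk hv h

lemma eUtil_dirac_le_bench (hF : IsProbOn F) (hk : IsStrategy k) {h : ℝ} (hh : h ∈ Iu) :
    eUtil F k (Measure.dirac h) ≤ bench F h := by
  rw [eUtil_dirac, bench_eq_integral_max]
  exact integral_mono_ae (integrable_bidUtil hF hk h)
    (hF.integrable_of_abs_le (by fun_prop) fun _ hv => abs_max_sub_le_one hh hv)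
    (hF.ae_mem_Iu.mono fun _ hv => bidUtil_le_max hk hv h)

lemma eUtil_eq_integral_eUtil_dirac (hF : IsProbOn F) (hk : IsStrategy k) {H : Measure ℝ}
    (hH : IsProbOn H) : eUtil F k H = ∫ h, eUtil F k (Measure.dirac h) ∂H := by
  have := hF.1; have := hH.1; have := hk.1
  simp only [eUtil_dirac]
  refine integral_integral_swap (Integrable.of_bound
    (stronglyMeasurable_bidUtil k).aestronglyMeasurable 1 ?_)
  filter_upwards [Measure.quasiMeasurePreserving_fst.ae hF.ae_mem_Iu] with p hp
  exact (Real.norm_eq_abs _).trans_le (abs_bidUtil_le_one hk hp p.2)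

end ExpectedUtility

def bestResponse (h : ℝ) : Kernel ℝ ℝ :=
  Kernel.deterministic (fun v => if h ≤ v then h else 0)
    (Measurable.ite measurableSet_Ici measurable_const measurable_const)

lemma isStrategy_bestResponse {h : ℝ} (hh : h ∈ Iu) : IsStrategy (bestResponse h) := by
  refine ⟨by unfold bestResponse; infer_instance, fun v => ?_⟩
  rw [bestResponse, Kernel.deterministic_apply]
  refine Measure.dirac_apply_of_mem ?_
  split_ifs
  exacts [hh, zero_mem_Iu]

instance : Nonempty {k : Kernel ℝ ℝ // IsStrategy k} :=
  ⟨⟨bestResponse 0, isStrategy_bestResponse zero_mem_Iu⟩⟩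

lemma eUtil_bestResponse_dirac {F : Measure ℝ} (hF : IsProbOn F) (h : ℝ) :
    eUtil F (bestResponse h) (Measure.dirac h) = bench F h := by
  rw [eUtil_dirac]
  refine integral_congr_ae (hF.ae_mem_Iu.mono fun v hv => ?_)
  simp only [bidUtil, bestResponse, Kernel.deterministic_apply, integral_dirac, util]
  by_cases hle : h ≤ v
  · simp [hle]
  · simp [hle, not_le.2 ((not_le.1 hle).trans_le' hv.1)]

section Regret

variable {F : Measure ℝ} {s : Kernel ℝ ℝ}

lemma iSup_eUtil_dirac (hF : IsProbOn F) {h : ℝ} (hh : h ∈ Iu) :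
    (⨆ s' : {k : Kernel ℝ ℝ // IsStrategy k}, eUtil F s'.1 (Measure.dirac h)) = bench F h :=
  le_antisymm (ciSup_le fun k => eUtil_dirac_le_bench hF k.2 hh)
    ((eUtil_bestResponse_dirac hF h).symm.le.trans
      (le_ciSup (f := fun s' : {k : Kernel ℝ ℝ // IsStrategy k} => eUtil F s'.1 _)
        ⟨bench F h, forall_mem_range.2 fun k => eUtil_dirac_le_bench hF k.2 hh⟩
        ⟨bestResponse h, isStrategy_bestResponse hh⟩))

lemma regret_dirac (hF : IsProbOn F) {h : ℝ} (hh : h ∈ Iu) :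
    regret F s (Measure.dirac h) = bench F h - eUtil F s (Measure.dirac h) := by
  rw [regret, iSup_eUtil_dirac hF hh]

lemma integrable_bench (hF : IsProbOn F) {H : Measure ℝ} (hH : IsProbOn H) :
    Integrable (bench F) H :=
  have := hF.1
  hH.integrable_of_abs_le (stronglyMeasurable_bench F).aestronglyMeasurable
    fun _ hh => abs_bench_le_one hF hh

lemma integrable_eUtil_dirac (hF : IsProbOn F) {k : Kernel ℝ ℝ} (hk : IsStrategy k)
    {H : Measure ℝ} (hH : IsProbOn H) : Integrable (fun h => eUtil F k (Measure.dirac h)) H :=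
  have := hF.1
  have := hk.1
  hH.integrable_of_abs_le (stronglyMeasurable_eUtil_dirac (F := F) (k := k)).aestronglyMeasurable
    fun h _ => abs_eUtil_dirac_le_one hF hk h

lemma iSup_eUtil_le_integral_bench (hF : IsProbOn F) {H : Measure ℝ} (hH : IsProbOn H) :
    (⨆ s' : {k : Kernel ℝ ℝ // IsStrategy k}, eUtil F s'.1 H) ≤ ∫ h, bench F h ∂H :=
  ciSup_le fun k => by
    rw [eUtil_eq_integral_eUtil_dirac hF k.2 hH]
    exact integral_mono_ae (integrable_eUtil_dirac hF k.2 hH) (integrable_bench hF hH)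
      (hH.ae_mem_Iu.mono fun _ hh => eUtil_dirac_le_bench hF k.2 hh)

lemma bddAbove_regret_dirac (hF : IsProbOn F) (hs : IsStrategy s) :
    BddAbove (range fun h : Iu => regret F s (Measure.dirac (h : ℝ))) := by
  refine ⟨2, forall_mem_range.2 fun h => ?_⟩
  rw [regret_dirac hF h.2]
  linarith [abs_le.1 (abs_bench_le_one hF h.2), abs_le.1 (abs_eUtil_dirac_le_one hF hs h)]

lemma regret_le_iSup_regret_dirac (hF : IsProbOn F) (hs : IsStrategy s) {H : Measure ℝ}
    (hH : IsProbOn H) : regret F s H ≤ ⨆ h : Iu, regret F s (Measure.dirac (h : ℝ)) := by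
  have := hH.1
  calc regret F s H ≤ ∫ h, bench F h ∂H - ∫ h, eUtil F s (Measure.dirac h) ∂H := by
        rw [regret, eUtil_eq_integral_eUtil_dirac hF hs hH]
        exact sub_le_sub_right (iSup_eUtil_le_integral_bench hF hH) _
    _ = ∫ h, (bench F h - eUtil F s (Measure.dirac h)) ∂H :=
        (integral_sub (integrable_bench hF hH) (integrable_eUtil_dirac hF hs hH)).symm
    _ ≤ ∫ _, (⨆ h : Iu, regret F s (Measure.dirac (h : ℝ))) ∂H := by
        refine integral_mono_ae ((integrable_bench hF hH).sub (integrable_eUtil_dirac hF hs hH))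
          (integrable_const _) (hH.ae_mem_Iu.mono fun h hh => ?_)
        dsimp only
        rw [← regret_dirac hF hh]
        exact le_ciSup (bddAbove_regret_dirac hF hs) ⟨h, hh⟩
    _ = _ := by simp

end Regret

theorem worst_case_regret_evaluation_general
    (F : Measure ℝ) (hF : IsProbOn F) (s : Kernel ℝ ℝ) (hs : IsStrategy s) :
    (⨆ H : {H : Measure ℝ // IsProbOn H}, regret F s H.1)
        = (⨆ h : Iu, regret F s (Measure.dirac (h : ℝ)))
      ∧ (⨆ h : Iu, regret F s (Measure.dirac (h : ℝ)))
        = ⨆ h : Iu,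
            ((∫ v, (v - (h : ℝ)) * (if (h : ℝ) ≤ v then 1 else 0) ∂F)
              - eUtil F s (Measure.dirac (h : ℝ))) := by
  have hdirac (h : Iu) : IsProbOn (Measure.dirac (h : ℝ)) := isProbOn_dirac h.2
  have : Nonempty Iu := ⟨⟨0, zero_mem_Iu⟩⟩
  have : Nonempty {H : Measure ℝ // IsProbOn H} := ⟨⟨_, hdirac ⟨0, zero_mem_Iu⟩⟩⟩
  have hbdd : BddAbove (range fun H : {H : Measure ℝ // IsProbOn H} => regret F s H.1) :=
    ⟨_, forall_mem_range.2 fun H => regret_le_iSup_regret_dirac hF hs H.2⟩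
  refine ⟨le_antisymm ?_ ?_, iSup_congr fun h => regret_dirac hF h.2⟩
  · exact ciSup_le fun H => regret_le_iSup_regret_dirac hF hs H.2
  · exact ciSup_le fun h => le_ciSup hbdd ⟨_, hdirac h⟩

/-- Theorem 1, performance evaluation: for any value distribution `F` on
`[0,1]` and any strategy `s` whose induced bid distribution is absolutely continuous, the
worst-case regret over all distributions `H` equals the worst case over deterministic highest
competing bids `h ∈ [0,1]`, which equals
`sup_h E_{v∼F}[(v−h)·1{v≥h}] − U_F(s,δ_h)`. -/
theorem worst_case_regret_evaluation
    (F : Measure ℝ) (hF : IsProbOn F) (s : Kernel ℝ ℝ) (hs : IsStrategy s)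
    (hac : bidDist F s ≪ volume) :
    (⨆ H : {H : Measure ℝ // IsProbOn H}, regret F s H.1)
        = (⨆ h : Iu, regret F s (Measure.dirac (h : ℝ)))
      ∧ (⨆ h : Iu, regret F s (Measure.dirac (h : ℝ)))
        = ⨆ h : Iu,
            ((∫ v, (v - (h : ℝ)) * (if (h : ℝ) ≤ v then 1 else 0) ∂F)
              - eUtil F s (Measure.dirac (h : ℝ))) :=
  worst_case_regret_evaluation_general F hF s hs

end FPA
end
end

section
/- Let F be a probability measure on [0,1] with F({0}) = 0, let Q : [0,1] → [0,1] be a quantile-based bidding strategy (strictly increasing and absolutely continuous), and let s_Q be the corresponding bidding strategy. Then for every y in [0,1], with h = Q(y), the expected utility against the deterministic highest competing bid h satisfies U_F(s_Q, δ_h) = ∫_y^1 (F⁻(t) − Q(t)) dt. Moreover, the induced bid distribution P_{s_Q,F} equals the pushforward of the uniform distribution on [0,1] under Q. -/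
/-! The quantile transform `F⁻` pushes the uniform distribution on `[0,1]` forward to `F`,
and `s_Q(v)` is the conditional law of `Q(t)` given `F⁻(t) = v` for uniform `t`: if `v` is
not an atom, `F⁻(t) = v` forces `t = F(v)`, and if it is, `{t | F⁻(t) = v}` is an interval
of length `F({v})`. So the joint law of value and bid is the image of the uniform
distribution under `t ↦ (F⁻(t), Q(t))`. Its second marginal is the bid distribution, and
since `Q` is increasing, the bid `Q(t)` beats `h = Q(y)` exactly when `t ≥ y`, which gives
the utility integral. -/

open MeasureTheory ProbabilityTheory Set

noncomputable section

namespace FPA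

open scoped ENNReal
open Function

lemma measurableSet_Iu : MeasurableSet Iu := measurableSet_Icc

instance : IsProbabilityMeasure (volume.restrict Iu) := ⟨by simp [Iu]⟩

lemma Yset_subset_Iu (F : Measure ℝ) (v : ℝ) : Yset F v ⊆ Iu := fun _ ht => ht.1

lemma unifOn_Iu : unifOn Iu = volume.restrict Iu := by
  simp [unifOn, Iu]

theorem setLIntegral_congr_of_iUnion {α ι : Type*} [MeasurableSpace α] [Countable ι]
    {μ : Measure α} {s : Set α} {Y : ι → Set α} {f g : α → ℝ≥0∞} (hs : MeasurableSet s)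
    (hY : ∀ i, MeasurableSet (Y i)) (hd : Pairwise (Disjoint on Y)) (hYs : ∀ i, Y i ⊆ s)
    (hout : ∀ x ∈ s \ ⋃ i, Y i, f x = g x)
    (hin : ∀ i, ∫⁻ x in Y i, f x ∂μ = ∫⁻ x in Y i, g x ∂μ) :
    ∫⁻ x in s, f x ∂μ = ∫⁻ x in s, g x ∂μ := by
  have hU := MeasurableSet.iUnion hY
  rw [← sdiff_union_of_subset (iUnion_subset hYs), lintegral_union hU disjoint_sdiff_left,
    lintegral_union hU disjoint_sdiff_left, setLIntegral_congr_fun (hs.diff hU) hout,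
    lintegral_iUnion hY hd, lintegral_iUnion hY hd]
  simp_rw [hin]

section Quantile

variable {F : Measure ℝ} [IsProbabilityMeasure F]

lemma cdf01_eq_cdf : cdf01 F = cdf F :=
  funext fun x => (cdf_eq_real F x).symm

lemma measure_compl_Iu (hF : F Iu = 1) : F Iuᶜ = 0 :=
  (prob_compl_eq_zero_iff measurableSet_Iu).2 hF

lemma mem_Iu_of_measure_singleton_ne_zero (hF : F Iu = 1) {v : ℝ} (hv : F {v} ≠ 0) : v ∈ Iu :=
  by_contra fun h => hv (measure_mono_null (singleton_subset_iff.2 h) (measure_compl_Iu hF))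

lemma cdf_eq_zero_of_neg (hF : F Iu = 1) {x : ℝ} (hx : x < 0) : cdf F x = 0 := by
  rw [cdf_eq_real, measureReal_eq_zero_iff]
  exact measure_mono_null (fun y (hy : y ≤ x) (hy' : y ∈ Iu) => (hy.trans_lt hx).not_ge hy'.1)
    (measure_compl_Iu hF)

lemma cdf_one (hF : F Iu = 1) : cdf F 1 = 1 := by
  refine le_antisymm (cdf_le_one F 1) (ENNReal.one_le_ofReal.1 ?_)
  rw [ofReal_cdf, ← hF]
  exact measure_mono fun y hy => hy.2

lemma qinv_le {t x : ℝ} (hx : x ∈ Iu) (h : t ≤ cdf F x) : qinv F t ≤ x :=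
  csInf_le ⟨0, fun _ hy => hy.1.1⟩ ⟨hx, by rwa [cdf01_eq_cdf]⟩

lemma nonempty_qinvSet (hF : F Iu = 1) {t : ℝ} (ht : t ≤ 1) :
    {x | x ∈ Iu ∧ t ≤ cdf01 F x}.Nonempty :=
  ⟨1, ⟨zero_le_one, le_rfl⟩, by rwa [cdf01_eq_cdf, cdf_one hF]⟩

lemma qinv_mem_Iu (hF : F Iu = 1) {t : ℝ} (ht : t ≤ 1) : qinv F t ∈ Iu :=
  ⟨le_csInf (nonempty_qinvSet hF ht) fun _ hy => hy.1.1,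
    qinv_le ⟨zero_le_one, le_rfl⟩ (by rwa [cdf_one hF])⟩

lemma monotoneOn_qinv (hF : F Iu = 1) : MonotoneOn (qinv F) Iu := fun _ _ _ hb hab =>
  csInf_le_csInf ⟨0, fun _ hy => hy.1.1⟩ (nonempty_qinvSet hF hb.2)
    fun _ hx => ⟨hx.1, hab.trans hx.2⟩

lemma le_cdf_qinv (hF : F Iu = 1) {t : ℝ} (ht : t ≤ 1) : t ≤ cdf F (qinv F t) := by
  refine ge_of_tendsto (((cdf F).right_continuous _).mono Ioi_subset_Ici_self) ?_
  filter_upwards [self_mem_nhdsWithin] with x hx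
  obtain ⟨y, ⟨-, hy⟩, hyx⟩ := exists_lt_of_csInf_lt (nonempty_qinvSet hF ht) hx
  rw [cdf01_eq_cdf] at hy
  exact hy.trans ((cdf F).mono hyx.le)

lemma qinv_le_iff (hF : F Iu = 1) {t x : ℝ} (ht : t ≤ 1) (hx : 0 ≤ x) :
    qinv F t ≤ x ↔ t ≤ cdf F x := by
  refine ⟨fun h => (le_cdf_qinv hF ht).trans ((cdf F).mono h), fun h => ?_⟩
  rcases le_or_gt x 1 with hx1 | hx1
  · exact qinv_le ⟨hx, hx1⟩ h
  · exact (qinv_mem_Iu hF ht).2.trans hx1.le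

lemma aemeasurable_qinv (hF : F Iu = 1) : AEMeasurable (qinv F) (volume.restrict Iu) :=
  aemeasurable_restrict_of_monotoneOn measurableSet_Iu (monotoneOn_qinv hF)

theorem map_qinv_volume (hF : F Iu = 1) : (volume.restrict Iu).map (qinv F) = F := by
  refine Measure.ext_of_Iic _ _ fun x => ?_
  rw [Measure.map_apply_of_aemeasurable (aemeasurable_qinv hF) measurableSet_Iic,
    Measure.restrict_apply' measurableSet_Iu, ← ofReal_cdf]
  rcases lt_or_ge x 0 with hx | hx
  · have hempty : qinv F ⁻¹' Iic x ∩ Iu = ∅ :=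
      eq_empty_of_forall_notMem fun t ⟨htx, ht⟩ =>
        (qinv_mem_Iu hF ht.2).1.not_gt (htx.trans_lt hx)
    rw [hempty, cdf_eq_zero_of_neg hF hx, measure_empty, ENNReal.ofReal_zero]
  · have hIcc : qinv F ⁻¹' Iic x ∩ Iu = Icc 0 (cdf F x) := by
      ext t
      refine ⟨fun ⟨htx, ht⟩ => ⟨ht.1, (qinv_le_iff hF ht.2 hx).1 htx⟩, fun ht => ?_⟩
      have ht1 : t ≤ 1 := ht.2.trans (cdf_le_one F x)
      exact ⟨(qinv_le_iff hF ht1 hx).2 ht.2, ht.1, ht1⟩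
    rw [hIcc, Real.volume_Icc, sub_zero]

lemma Yset_subset_Icc (hF : F Iu = 1) (v : ℝ) :
    Yset F v ⊆ Icc (leftLim (cdf F) v) (cdf F v) := by
  rintro t ⟨ht, rfl⟩
  refine ⟨?_, le_cdf_qinv hF ht.2⟩
  rw [(cdf F).mono.leftLim_eq_sSup]
  refine csSup_le (nonempty_Iio.image _) ?_
  rintro _ ⟨x, hx, rfl⟩
  rcases lt_or_ge x 0 with hx0 | hx0
  · rw [cdf_eq_zero_of_neg hF hx0]
    exact ht.1
  · exact (not_le.1 fun h => (not_le.2 hx) ((qinv_le_iff hF ht.2 hx0).2 h)).le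

lemma Ioc_subset_Yset (hF : F Iu = 1) {v : ℝ} (hv : v ∈ Iu) :
    Ioc (leftLim (cdf F) v) (cdf F v) ⊆ Yset F v := by
  rintro t ⟨hlt, hle⟩
  have ht1 : t ≤ 1 := hle.trans (cdf_le_one F v)
  have ht0 : 0 ≤ t :=
    ((cdf_nonneg F _).trans ((cdf F).mono.le_leftLim (sub_one_lt v))).trans hlt.le
  refine ⟨⟨ht0, ht1⟩, le_antisymm ((qinv_le_iff hF ht1 hv.1).2 hle) (not_lt.1 fun h => ?_)⟩
  exact hlt.not_ge ((le_cdf_qinv hF ht1).trans ((cdf F).mono.le_leftLim h))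

lemma ordConnected_Yset (hF : F Iu = 1) (v : ℝ) : (Yset F v).OrdConnected :=
  ⟨fun _ ha _ hb t ht =>
    have htIu : t ∈ Iu := ⟨ha.1.1.trans ht.1, ht.2.trans hb.1.2⟩
    ⟨htIu, le_antisymm (hb.2 ▸ monotoneOn_qinv hF htIu hb.1 ht.2)
      (ha.2 ▸ monotoneOn_qinv hF ha.1 htIu ht.1)⟩⟩

lemma measure_singleton_eq_ofReal_cdf_sub_leftLim (v : ℝ) :
    F {v} = ENNReal.ofReal (cdf F v - leftLim (cdf F) v) := by
  rw [← (cdf F).measure_singleton, measure_cdf]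

lemma volume_Yset (hF : F Iu = 1) {v : ℝ} (hv : v ∈ Iu) : volume (Yset F v) = F {v} := by
  rw [measure_singleton_eq_ofReal_cdf_sub_leftLim]
  refine le_antisymm ?_ ?_
  · simpa using measure_mono (μ := volume) (Yset_subset_Icc hF v)
  · simpa using measure_mono (μ := volume) (Ioc_subset_Yset hF hv)

lemma cdf_qinv_of_measure_singleton_eq_zero (hF : F Iu = 1) {t : ℝ} (ht : t ∈ Iu)
    (h : F {qinv F t} = 0) : cdf F (qinv F t) = t := by
  obtain ⟨hl, hu⟩ := Yset_subset_Icc hF _ ⟨ht, rfl⟩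
  rw [measure_singleton_eq_ofReal_cdf_sub_leftLim, ENNReal.ofReal_eq_zero] at h
  linarith

variable {Q : ℝ → ℝ} {s : Kernel ℝ ℝ}

lemma IsQuantileStrategy.apply_qinv_of_measure_singleton_eq_zero (hs : IsQuantileStrategy F Q s)
    (hF : F Iu = 1) {t : ℝ} (ht : t ∈ Iu) (h : F {qinv F t} = 0) :
    s (qinv F t) = Measure.dirac (Q t) := by
  rw [hs.2 _ (qinv_mem_Iu hF ht.2), if_pos h, cdf01_eq_cdf,
    cdf_qinv_of_measure_singleton_eq_zero hF ht h]

lemma IsQuantileStrategy.measure_singleton_mul_lintegral (hs : IsQuantileStrategy F Q s)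
    (hF : F Iu = 1) (hQ : MonotoneOn Q Iu) {v : ℝ} (hv : F {v} ≠ 0)
    {f : ℝ → ℝ≥0∞} (hf : Measurable f) :
    F {v} * ∫⁻ b, f b ∂s v = ∫⁻ t in Yset F v, f (Q t) := by
  have hvIu := mem_Iu_of_measure_singleton_ne_zero hF hv
  have hQY : AEMeasurable Q (unifOn (Yset F v)) :=
    (aemeasurable_restrict_of_monotoneOn (ordConnected_Yset hF v).measurableSet
      (hQ.mono (Yset_subset_Iu F v))).smul_measure _
  rw [hs.2 v hvIu, if_neg hv, lintegral_map' hf.aemeasurable hQY, unifOn, lintegral_smul_measure,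
    volume_Yset hF hvIu, smul_eq_mul, ← mul_assoc, ENNReal.mul_inv_cancel hv (measure_ne_top _ _),
    one_mul]

theorem IsQuantileStrategy.lintegral_lintegral (hs : IsQuantileStrategy F Q s) (hF : F Iu = 1)
    (hQ : MonotoneOn Q Iu) {f : ℝ × ℝ → ℝ≥0∞} (hf : Measurable f) :
    ∫⁻ v, ∫⁻ b, f (v, b) ∂s v ∂F = ∫⁻ t in Iu, f (qinv F t, Q t) := by
  have := hs.1.1
  let N : Set ℝ := {v | 0 < F {v}}
  have : Countable N := ((Measure.countable_meas_level_set_pos measurable_id).mono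
    fun v hv => by simpa [N] using hv).to_subtype
  have hYm (v : ℝ) : MeasurableSet (Yset F v) := (ordConnected_Yset hF v).measurableSet
  calc ∫⁻ v, ∫⁻ b, f (v, b) ∂s v ∂F
      = ∫⁻ t in Iu, ∫⁻ b, f (qinv F t, b) ∂s (qinv F t) := by
        conv_lhs => rw [← map_qinv_volume hF]
        exact lintegral_map' hf.lintegral_kernel_prod_right'.aemeasurable (aemeasurable_qinv hF)
    _ = ∫⁻ t in Iu, f (qinv F t, Q t) := by
      refine setLIntegral_congr_of_iUnion measurableSet_Iu (fun v : N => hYm v) ?_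
        (fun v => Yset_subset_Iu F v) ?_ ?_
      · exact fun v w hvw =>
          disjoint_left.2 fun t hv hw => hvw (Subtype.ext (hv.2.symm.trans hw.2))
      · rintro t ⟨ht, htN⟩
        have h : F {qinv F t} = 0 := by
          by_contra h
          exact htN (mem_iUnion.2 ⟨⟨qinv F t, pos_iff_ne_zero.2 h⟩, ht, rfl⟩)
        rw [hs.apply_qinv_of_measure_singleton_eq_zero hF ht h, lintegral_dirac]
      · rintro ⟨v, hv⟩
        calc ∫⁻ t in Yset F v, ∫⁻ b, f (qinv F t, b) ∂s (qinv F t)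
            = ∫⁻ t in Yset F v, ∫⁻ b, f (v, b) ∂s v :=
              setLIntegral_congr_fun (hYm v) fun t ht => by rw [ht.2]
          _ = F {v} * ∫⁻ b, f (v, b) ∂s v := by
              rw [setLIntegral_const,
                volume_Yset hF (mem_Iu_of_measure_singleton_ne_zero hF hv.ne'), mul_comm]
          _ = ∫⁻ t in Yset F v, f (v, Q t) :=
              hs.measure_singleton_mul_lintegral hF hQ hv.ne' (hf.comp measurable_prodMk_left)
          _ = ∫⁻ t in Yset F v, f (qinv F t, Q t) :=
              setLIntegral_congr_fun (hYm v) fun t ht => by rw [ht.2]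

lemma aemeasurable_qinv_prodMk (hF : F Iu = 1) (hQ : MonotoneOn Q Iu) :
    AEMeasurable (fun t => (qinv F t, Q t)) (volume.restrict Iu) :=
  (aemeasurable_qinv hF).prodMk (aemeasurable_restrict_of_monotoneOn measurableSet_Iu hQ)

theorem IsQuantileStrategy.compProd_eq_map (hs : IsQuantileStrategy F Q s) (hF : F Iu = 1)
    (hQ : MonotoneOn Q Iu) : F ⊗ₘ s = (volume.restrict Iu).map (fun t => (qinv F t, Q t)) := by
  have := hs.1.1
  refine Measure.ext_of_lintegral _ fun f hf => ?_
  rw [Measure.lintegral_compProd hf, hs.lintegral_lintegral hF hQ hf,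
    lintegral_map' hf.aemeasurable (aemeasurable_qinv_prodMk hF hQ)]

lemma measurable_util_s2 (h : ℝ) : Measurable fun p : ℝ × ℝ => util p.2 h p.1 :=
  (measurable_fst.sub measurable_snd).mul
    (Measurable.ite (measurableSet_le measurable_const measurable_snd) measurable_const
      measurable_const)

lemma integrableOn_util (hF : F Iu = 1) (hQ : MonotoneOn Q Iu) (h : ℝ) :
    IntegrableOn (fun t => util (Q t) h (qinv F t)) Iu := by
  refine Integrable.mono ((monotoneOn_qinv hF).integrableOn_isCompact isCompact_Icc |>.sub
      (hQ.integrableOn_isCompact isCompact_Icc))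
    ((measurable_util_s2 h).comp_aemeasurable (aemeasurable_qinv_prodMk hF hQ)).aestronglyMeasurable
    (ae_of_all _ fun t => ?_)
  simp only [util, norm_mul]
  split_ifs <;> simp

theorem IsQuantileStrategy.integral_integral_util (hs : IsQuantileStrategy F Q s)
    (hF : F Iu = 1) (hQ : MonotoneOn Q Iu) (h : ℝ) :
    ∫ v, ∫ b, util b h v ∂s v ∂F = ∫ t in Iu, util (Q t) h (qinv F t) := by
  have := hs.1.1
  have hφ := aemeasurable_qinv_prodMk hF hQ
  have hjoint := hs.compProd_eq_map hF hQ
  have hint : Integrable (fun p : ℝ × ℝ => util p.2 h p.1) (F ⊗ₘ s) := by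
    rw [hjoint, integrable_map_measure (measurable_util_s2 h).aestronglyMeasurable hφ]
    exact integrableOn_util hF hQ h
  rw [← Measure.integral_compProd hint, hjoint,
    integral_map hφ (measurable_util_s2 h).aestronglyMeasurable]

theorem IsQuantileStrategy.bidDist_eq_map (hs : IsQuantileStrategy F Q s) (hF : F Iu = 1)
    (hQ : MonotoneOn Q Iu) : bidDist F s = (volume.restrict Iu).map Q := by
  have := hs.1.1
  rw [bidDist, ← Measure.snd_compProd, hs.compProd_eq_map hF hQ, Measure.snd,
    AEMeasurable.map_map_of_aemeasurable measurable_snd.aemeasurable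
      (aemeasurable_qinv_prodMk hF hQ)]
  rfl

end Quantile

lemma setIntegral_util_eq_intervalIntegral {Q : ℝ → ℝ} (hQ : StrictMonoOn Q Iu) {y : ℝ}
    (hy : y ∈ Iu) (g : ℝ → ℝ) :
    ∫ t in Iu, util (Q t) (Q y) (g t) = ∫ t in y..1, (g t - Q t) := by
  calc ∫ t in Iu, util (Q t) (Q y) (g t)
      = ∫ t in Iu, (Ici y).indicator (fun t => g t - Q t) t :=
        setIntegral_congr_fun measurableSet_Iu fun t ht => by
          simp only [util, indicator, mem_Ici, hQ.le_iff_le hy ht]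
          split_ifs <;> ring
    _ = ∫ t in Icc y 1, (g t - Q t) := by
        have hIcc : Ici y ∩ Iu = Icc y 1 := Set.ext fun t =>
          ⟨fun ⟨h1, _, h2⟩ => ⟨h1, h2⟩, fun ⟨h1, h2⟩ => ⟨h1, hy.1.trans h1, h2⟩⟩
        rw [integral_indicator measurableSet_Ici, Measure.restrict_restrict measurableSet_Ici, hIcc]
    _ = ∫ t in y..1, (g t - Q t) := by
        rw [integral_Icc_eq_integral_Ioc, intervalIntegral.integral_of_le hy.2]

theorem quantile_strategy_utility_general
    (F : Measure ℝ) (hF : IsProbOn F)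
    (Q : ℝ → ℝ) (hQmono : StrictMonoOn Q Iu)
    (s : Kernel ℝ ℝ) (hs : IsQuantileStrategy F Q s) :
    (∀ y ∈ Iu, eUtil F s (Measure.dirac (Q y)) = ∫ t in y..(1:ℝ), (qinv F t - Q t))
      ∧ bidDist F s = (unifOn Iu).map Q := by
  obtain ⟨_, hFIu⟩ := hF
  refine ⟨fun y hy => ?_, by rw [unifOn_Iu, hs.bidDist_eq_map hFIu hQmono.monotoneOn]⟩
  simp only [eUtil, integral_dirac]
  rw [hs.integral_integral_util hFIu hQmono.monotoneOn,
    setIntegral_util_eq_intervalIntegral hQmono hy]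

/-- Lemma: quantile-based bidding: for a value distribution `F` on `[0,1]`
with `F({0}) = 0` and a quantile-based bidding strategy `Q` (strictly increasing, absolutely
continuous, mapping `[0,1]` to `[0,1]`) with corresponding bidding strategy `s_Q`, for every
`y ∈ [0,1]` and `h = Q(y)` the expected utility is `∫_y^1 (F⁻(t) − Q(t)) dt`, and the induced
bid distribution is the pushforward of the uniform distribution on `[0,1]` under `Q`. -/
theorem quantile_strategy_utility
    (F : Measure ℝ) (hF : IsProbOn F) (hF0 : F {0} = 0)
    (Q : ℝ → ℝ) (hQmono : StrictMonoOn Q Iu) (hQac : AbsContOn01 Q)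
    (hQmaps : MapsTo Q Iu Iu)
    (s : Kernel ℝ ℝ) (hs : IsQuantileStrategy F Q s) :
    (∀ y ∈ Iu, eUtil F s (Measure.dirac (Q y)) = ∫ t in y..(1:ℝ), (qinv F t - Q t))
      ∧ bidDist F s = (unifOn Iu).map Q :=
  quantile_strategy_utility_general F hF Q hQmono s hs

end FPA
end
end

section
/- Let F be a probability measure on [0,1] with F({0}) = 0, and let Q* : [0,1] → [0,1] be an absolutely continuous strictly increasing function with Q*(0) = 0, 0 < Q*(y) < F⁻(y) for all y in (0,1], and (Q*)'(y) = (F⁻(y) − Q*(y)) / (1 − F(Q*(y))) for almost every y. Define H* : [0, Q*(1)] → [0,1] by H*(x) = exp( −∫_{(Q*)^{-1}(x)}^1 1/(1 − F(Q*(t))) dt ). Then G := H* ∘ Q* is absolutely continuous on [0,1] and satisfies, for almost every y in [0,1], G'(y) = G(y) / (1 − F(Q*(y))) = G(y) · (Q*)'(y) / (F⁻(y) − Q*(y)). -/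
/-!
On `[0,1]`, `H*(Q* y) = exp (∫_1^y f)` with `f t = 1 / (1 - F(Q* t))`. The denominator stays
positive because `Q*(1) < F⁻(1)`, so `f` is monotone, hence continuous off a countable set.
There the exponential of its primitive has derivative `exp (∫_1^y f) · f y` by the first
fundamental theorem of calculus, and the second fundamental theorem with a countable exceptional
set gives absolute continuity. The last identity is the ODE for `Q*` solved for `1 / (1 - F(Q* y))`.
-/

open MeasureTheory ProbabilityTheory Set

noncomputable section

namespace FPA

theorem _root_.Monotone.hasDerivAt_exp_primitive {f : ℝ → ℝ} (hf : Monotone f) (b : ℝ) {y : ℝ}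
    (hy : ContinuousAt f y) :
    HasDerivAt (fun x => Real.exp (∫ t in b..x, f t)) (Real.exp (∫ t in b..y, f t) * f y) y :=
  (intervalIntegral.integral_hasDerivAt_right hf.intervalIntegrable
    hf.measurable.stronglyMeasurable.stronglyMeasurableAtFilter hy).exp

theorem _root_.Monotone.ae_hasDerivAt_exp_primitive {f : ℝ → ℝ} (hf : Monotone f) (b : ℝ) :
    ∀ᵐ y, HasDerivAt (fun x => Real.exp (∫ t in b..x, f t))
      (Real.exp (∫ t in b..y, f t) * f y) y := by
  filter_upwards [hf.countable_not_continuousAt.ae_notMem volume] with y hy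
  exact hf.hasDerivAt_exp_primitive b (not_not.1 hy)

theorem _root_.Monotone.absContOn01_exp_primitive {f : ℝ → ℝ} (hf : Monotone f) (b : ℝ) :
    AbsContOn01 (fun x => Real.exp (∫ t in b..x, f t)) := by
  have hcont : Continuous fun x => Real.exp (∫ t in b..x, f t) :=
    (intervalIntegral.continuous_primitive (fun _ _ => hf.intervalIntegrable) b).rexp
  have hint : ∀ x y : ℝ,
      IntervalIntegrable (fun t => Real.exp (∫ u in b..t, f u) * f t) volume x y :=
    fun x y => hf.intervalIntegrable.continuousOn_mul hcont.continuousOn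
  refine ⟨_, hint 0 1, fun x hx => ?_⟩
  rw [integral_eq_of_hasDerivAt_off_countable_of_le _ _ hx.1 hf.countable_not_continuousAt
    hcont.continuousOn (fun y hy => hf.hasDerivAt_exp_primitive b (not_not.1 hy.2)) (hint 0 x)]
  ring

theorem AbsContOn01.congr {f g : ℝ → ℝ} (hf : AbsContOn01 f) (hfg : EqOn f g Iu) :
    AbsContOn01 g := by
  obtain ⟨f', hf', hf⟩ := hf
  refine ⟨f', hf', fun x hx => ?_⟩
  rw [← hfg hx, ← hfg ⟨le_rfl, zero_le_one⟩]
  exact hf x hx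

theorem monotone_cdf01 (F : Measure ℝ) [IsFiniteMeasure F] : Monotone (cdf01 F) :=
  fun _ _ hxy => ENNReal.toReal_mono (measure_ne_top F _) (measure_mono (Iic_subset_Iic.2 hxy))

theorem cdf01_lt_of_lt_qinv {F : Measure ℝ} {x t : ℝ} (hx : x ∈ Iu) (hxt : x < qinv F t) :
    cdf01 F x < t := by
  by_contra! htx
  exact hxt.not_ge (csInf_le ⟨0, fun _ hz => hz.1.1⟩ ⟨hx, htx⟩)

/-- The integrand `1 / (1 - F(Q t))` of `Hstar`, frozen outside `[0,1]` so that it is monotone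
on all of `ℝ`. -/
def survivalInv (F : Measure ℝ) (Q : ℝ → ℝ) (t : ℝ) : ℝ :=
  1 / (1 - cdf01 F (Q (projIcc 0 1 zero_le_one t)))

theorem monotone_survivalInv {F : Measure ℝ} [IsFiniteMeasure F] {Q : ℝ → ℝ}
    (hQ : MonotoneOn Q Iu) (hQ1 : cdf01 F (Q 1) < 1) : Monotone (survivalInv F Q) := by
  set c : ℝ → ℝ := fun t => cdf01 F (Q (projIcc (0:ℝ) 1 zero_le_one t))
  have hc : Monotone c := fun s t hst => monotone_cdf01 F
    (hQ (projIcc (0:ℝ) 1 _ s).2 (projIcc (0:ℝ) 1 _ t).2 (monotone_projIcc zero_le_one hst))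
  intro s t hst
  have hlt : c t < 1 := (monotone_cdf01 F
    (hQ (projIcc (0:ℝ) 1 _ t).2 ⟨zero_le_one, le_rfl⟩ (projIcc (0:ℝ) 1 _ t).2.2)).trans_lt hQ1
  exact one_div_le_one_div_of_le (sub_pos.2 hlt) (sub_le_sub_left (hc hst) 1)

theorem Hstar_apply_eq_exp_integral {F : Measure ℝ} {Q : ℝ → ℝ} (hQ : InjOn Q Iu) {y : ℝ}
    (hy : y ∈ Iu) : Hstar F Q (Q y) = Real.exp (∫ t in (1:ℝ)..y, survivalInv F Q t) := by
  rw [Hstar, hQ.leftInvOn_invFunOn hy, intervalIntegral.integral_symm, neg_neg]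
  refine congrArg Real.exp (intervalIntegral.integral_congr fun t ht => ?_)
  rw [uIcc_of_ge hy.2] at ht
  simp only [survivalInv, projIcc_of_mem zero_le_one ⟨hy.1.trans ht.1, ht.2⟩]

theorem worst_case_bid_cdf_ode_general
    (F : Measure ℝ) (hF : IsProbOn F)
    (Q : ℝ → ℝ) (hQmono : StrictMonoOn Q Iu)
    (hQmaps : MapsTo Q Iu Iu)
    (hQbd : ∀ y ∈ Set.Ioc (0:ℝ) 1, 0 < Q y ∧ Q y < qinv F y)
    (hode : ∀ᵐ y ∂(volume.restrict Iu),
      HasDerivAt Q ((qinv F y - Q y) / (1 - cdf01 F (Q y))) y) :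
    AbsContOn01 (fun y => Hstar F Q (Q y))
      ∧ ∀ᵐ y ∂(volume.restrict Iu),
          HasDerivAt (fun y => Hstar F Q (Q y))
            (Hstar F Q (Q y) / (1 - cdf01 F (Q y))) y
          ∧ Hstar F Q (Q y) / (1 - cdf01 F (Q y))
              = Hstar F Q (Q y) * deriv Q y / (qinv F y - Q y) := by
  have := hF.1
  have hQ1 : cdf01 F (Q 1) < 1 :=
    cdf01_lt_of_lt_qinv (hQmaps ⟨zero_le_one, le_rfl⟩) (hQbd 1 ⟨zero_lt_one, le_rfl⟩).2
  have hmono := monotone_survivalInv hQmono.monotoneOn hQ1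
  have hG : ∀ y ∈ Iu, Hstar F Q (Q y) = Real.exp (∫ t in (1:ℝ)..y, survivalInv F Q t) :=
    fun y hy => Hstar_apply_eq_exp_integral hQmono.injOn hy
  refine ⟨(hmono.absContOn01_exp_primitive 1).congr fun y hy => (hG y hy).symm, ?_⟩
  have hIoo : volume.restrict Iu = volume.restrict (Ioo (0:ℝ) 1) :=
    (Measure.restrict_congr_set Ioo_ae_eq_Icc).symm
  rw [hIoo] at hode ⊢
  filter_upwards [ae_restrict_mem measurableSet_Ioo,
    ae_restrict_of_ae (hmono.ae_hasDerivAt_exp_primitive 1), hode] with y hy hderiv hQy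
  have hyIu : y ∈ Iu := Ioo_subset_Icc_self hy
  have hsurv : survivalInv F Q y = 1 / (1 - cdf01 F (Q y)) := by
    rw [survivalInv, projIcc_of_mem zero_le_one hyIu]
  have hden : 1 - cdf01 F (Q y) ≠ 0 :=
    (sub_pos.2 ((monotone_cdf01 F (hQmono.monotoneOn hyIu ⟨zero_le_one, le_rfl⟩ hy.2.le)).trans_lt
      hQ1)).ne'
  have hgap : qinv F y - Q y ≠ 0 := (sub_pos.2 (hQbd y ⟨hy.1, hy.2.le⟩).2).ne'
  refine ⟨?_, by rw [hQy.deriv]; field_simp⟩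
  rw [div_eq_mul_one_div, ← hsurv, hG y hyIu]
  exact hderiv.congr_of_eventuallyEq (Filter.eventually_of_mem (Ioo_mem_nhds hy.1 hy.2)
    fun z hz => hG z (Ioo_subset_Icc_self hz))

/-- Lemma: the candidate worst-case bid distribution: with `Q*` as in the
ODE lemma and `H*(x) = exp(−∫_{(Q*)⁻¹(x)}^1 dt/(1 − F(Q*(t))))`, the function
`G := H* ∘ Q*` is absolutely continuous on `[0,1]` and satisfies, for a.e. `y ∈ [0,1]`,
`G'(y) = G(y)/(1 − F(Q*(y))) = G(y)·(Q*)'(y)/(F⁻(y) − Q*(y))`. -/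
theorem worst_case_bid_cdf_ode
    (F : Measure ℝ) (hF : IsProbOn F) (hF0 : F {0} = 0)
    (Q : ℝ → ℝ) (hQac : AbsContOn01 Q) (hQmono : StrictMonoOn Q Iu)
    (hQmaps : MapsTo Q Iu Iu) (hQ0 : Q 0 = 0)
    (hQbd : ∀ y ∈ Set.Ioc (0:ℝ) 1, 0 < Q y ∧ Q y < qinv F y)
    (hode : ∀ᵐ y ∂(volume.restrict Iu),
      HasDerivAt Q ((qinv F y - Q y) / (1 - cdf01 F (Q y))) y) :
    AbsContOn01 (fun y => Hstar F Q (Q y))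
      ∧ ∀ᵐ y ∂(volume.restrict Iu),
          HasDerivAt (fun y => Hstar F Q (Q y))
            (Hstar F Q (Q y) / (1 - cdf01 F (Q y))) y
          ∧ Hstar F Q (Q y) / (1 - cdf01 F (Q y))
              = Hstar F Q (Q y) * deriv Q y / (qinv F y - Q y) :=
  worst_case_bid_cdf_ode_general F hF Q hQmono hQmaps hQbd hode

end FPA
end
end

section
/- Let F be a probability measure on [0,1] with F({0}) = 0, let Q* be an absolutely continuous strictly increasing function on [0,1] with Q*(0) = 0, 0 < Q*(y) < F⁻(y) for all y in (0,1], and (Q*)'(y) = (F⁻(y) − Q*(y)) / (1 − F(Q*(y))) a.e., and let H* be the probability distribution on [0, Q*(1)] with CDF H*(x) = exp( −∫_{(Q*)^{-1}(x)}^1 1/(1 − F(Q*(t))) dt ). Then for every value v in [0,1], every bid of the form Q*(y) with y in [0,1] and F⁻(y) = v maximizes the expected utility b ↦ u(b | v, H*) = (v − b) · H*(b) over b in [0,1]. -/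
open MeasureTheory ProbabilityTheory Set

noncomputable section

namespace FPA

/-- The CDF of the candidate distribution `H*`, extended to all bids: it equals `1` for
bids at or above `Q*(1)` and `exp(−∫_{(Q*)⁻¹(x)}^1 dt/(1 − F(Q*(t))))` below. -/
def HstarCDF (F : Measure ℝ) (Q : ℝ → ℝ) (x : ℝ) : ℝ :=
  if Q 1 ≤ x then 1 else Hstar F Q x

end FPA

/-!
Along the curve of bids `b = Q*(t)`, the utility `φ(t) = (v - Q*(t)) · H*(Q*(t))` is absolutely
continuous, and the ODE for `Q*` makes the two terms of its derivative collapse to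
`φ'(t) = H*(Q*(t)) · (v - F⁻(t)) / (1 - F(Q*(t)))` a.e. As `F⁻` is nondecreasing with
`F⁻(y) = v`, `φ` increases on `[0, y]` and decreases on `[y, 1]`. Every bid below `Q*(1)` is some
`Q*(t)`, and a bid at or above `Q*(1)` wins surely, so it does no better than `Q*(1)` itself.
-/

open Filter

namespace AbsolutelyContinuousOnInterval

variable {a b : ℝ}

theorem congr {X : Type*} [PseudoMetricSpace X] {f g : ℝ → X}
    (hf : AbsolutelyContinuousOnInterval f a b) (hfg : EqOn f g (uIcc a b)) :
    AbsolutelyContinuousOnInterval g a b := by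
  refine hf.congr' (eventually_inf_principal.2 (Eventually.of_forall fun E hE => ?_))
  refine Finset.sum_congr rfl fun i hi => ?_
  rw [hfg (hE.1 i hi).1, hfg (hE.1 i hi).2]

theorem _root_.LipschitzOnWith.comp_absolutelyContinuousOnInterval {X Y : Type*}
    [PseudoMetricSpace X] [PseudoMetricSpace Y] {g : X → Y} {K : NNReal} {s : Set X}
    {f : ℝ → X} (hg : LipschitzOnWith K g s) (hf : AbsolutelyContinuousOnInterval f a b)
    (hfs : MapsTo f (uIcc a b) s) : AbsolutelyContinuousOnInterval (g ∘ f) a b := by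
  have hKf := Tendsto.const_mul (K : ℝ) hf
  rw [mul_zero] at hKf
  refine squeeze_zero' (Eventually.of_forall fun E => Finset.sum_nonneg fun i _ => dist_nonneg)
    (eventually_inf_principal.2 (Eventually.of_forall fun E hE => ?_)) hKf
  rw [Finset.mul_sum]
  exact Finset.sum_le_sum fun i hi => hg.dist_le_mul _ (hfs (hE.1 i hi).1) _ (hfs (hE.1 i hi).2)

theorem _root_.ContDiff.comp_absolutelyContinuousOnInterval {F : Type*} [NormedAddCommGroup F]
    [NormedSpace ℝ F] {g : ℝ → F} {f : ℝ → ℝ} (hg : ContDiff ℝ 1 g)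
    (hf : AbsolutelyContinuousOnInterval f a b) :
    AbsolutelyContinuousOnInterval (g ∘ f) a b := by
  obtain ⟨C, hC⟩ := hf.exists_bound
  obtain ⟨K, hK⟩ := hg.contDiffOn.exists_lipschitzOnWith (s := Icc (-C) C) one_ne_zero
    (convex_Icc _ _) isCompact_Icc
  exact hK.comp_absolutelyContinuousOnInterval hf fun x hx => abs_le.1 (hC x hx)

theorem le_of_ae_deriv_nonneg {f : ℝ → ℝ} (hab : a ≤ b)
    (hf : AbsolutelyContinuousOnInterval f a b) (hf' : ∀ᵐ x, x ∈ Icc a b → 0 ≤ deriv f x) :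
    f a ≤ f b := by
  rw [← sub_nonneg, ← hf.integral_deriv_eq_sub]
  exact intervalIntegral.integral_nonneg_of_ae_restrict hab
    ((ae_restrict_iff' measurableSet_Icc).2 hf')

theorem ge_of_ae_deriv_nonpos {f : ℝ → ℝ} (hab : a ≤ b)
    (hf : AbsolutelyContinuousOnInterval f a b) (hf' : ∀ᵐ x, x ∈ Icc a b → deriv f x ≤ 0) :
    f b ≤ f a := by
  have h := le_of_ae_deriv_nonneg hab hf.neg <| hf'.mono fun x hx hxab => by
    rw [deriv.neg]; exact neg_nonneg.2 (hx hxab)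
  simpa using h

end AbsolutelyContinuousOnInterval

namespace FPA

section Quantile

variable {F : Measure ℝ}

lemma cdf01_mono (hF : IsProbOn F) : Monotone (cdf01 F) := fun _ _ hxy =>
  have := hF.1
  ENNReal.toReal_mono (measure_ne_top _ _) (measure_mono (Iic_subset_Iic.2 hxy))

lemma cdf01_one (hF : IsProbOn F) : cdf01 F 1 = 1 := by
  have := hF.1
  have h : F (Iic 1) = 1 := le_antisymm prob_le_one (hF.2 ▸ measure_mono fun _ hx => hx.2)
  simp [cdf01, h]

lemma qinv_le_of_le_cdf01 {t x : ℝ} (hx : x ∈ Iu) (htx : t ≤ cdf01 F x) : qinv F t ≤ x :=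
  csInf_le ⟨0, fun _ hz => hz.1.1⟩ ⟨hx, htx⟩

lemma qinv_mono (hF : IsProbOn F) {s t : ℝ} (hst : s ≤ t) (ht : t ≤ 1) :
    qinv F s ≤ qinv F t :=
  csInf_le_csInf ⟨0, fun _ hz => hz.1.1⟩ ⟨1, ⟨zero_le_one, le_rfl⟩, by rwa [cdf01_one hF]⟩
    fun _ hx => ⟨hx.1, hst.trans hx.2⟩

lemma cdf01_lt_one_of_lt_qinv_one (hF : IsProbOn F) {x : ℝ} (hx0 : 0 ≤ x)
    (hx : x < qinv F 1) : cdf01 F x < 1 := by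
  have hx1 : x < 1 := hx.trans_le (qinv_le_of_le_cdf01 ⟨zero_le_one, le_rfl⟩ (cdf01_one hF).ge)
  by_contra! h
  exact hx.not_ge (qinv_le_of_le_cdf01 ⟨hx0, hx1.le⟩ h)

end Quantile

def hstarIntegrand (F : Measure ℝ) (Q : ℝ → ℝ) (t : ℝ) : ℝ := 1 / (1 - cdf01 F (Q t))

/-- `(v - Q t) · H*(Q t)` for `t ∈ [0,1]`, see `HstarCDF_apply_of_mem`. -/
def quantileUtility (F : Measure ℝ) (Q : ℝ → ℝ) (v t : ℝ) : ℝ :=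
  (v - Q t) * Real.exp (∫ u in (1 : ℝ)..t, hstarIntegrand F Q u)

section Hstar

variable {F : Measure ℝ} {Q : ℝ → ℝ}

lemma HstarCDF_apply_of_mem (hQ : StrictMonoOn Q Iu) {t : ℝ} (ht : t ∈ Iu) :
    HstarCDF F Q (Q t) = Real.exp (∫ u in (1 : ℝ)..t, hstarIntegrand F Q u) := by
  rcases ht.2.eq_or_lt with rfl | ht1
  · simp [HstarCDF]
  · rw [HstarCDF, if_neg (hQ ht ⟨zero_le_one, le_rfl⟩ ht1).not_ge, Hstar,
      hQ.injOn.leftInvOn_invFunOn ht, intervalIntegral.integral_symm, neg_neg]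
    rfl

variable (hF : IsProbOn F) (hQ : MonotoneOn Q Iu) (hQ1 : cdf01 F (Q 1) < 1)
include hF hQ hQ1

lemma one_sub_cdf01_pos {t : ℝ} (ht : t ∈ Iu) : 0 < 1 - cdf01 F (Q t) := by
  linarith [cdf01_mono hF (hQ ht ⟨zero_le_one, le_rfl⟩ ht.2)]

lemma monotoneOn_hstarIntegrand : MonotoneOn (hstarIntegrand F Q) Iu := fun _ hs _ ht hst =>
  one_div_le_one_div_of_le (one_sub_cdf01_pos hF hQ hQ1 ht)
    (by linarith [cdf01_mono hF (hQ hs ht hst)])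

lemma intervalIntegrable_hstarIntegrand : IntervalIntegrable (hstarIntegrand F Q) volume 0 1 :=
  ((monotoneOn_hstarIntegrand hF hQ hQ1).mono (uIcc_of_le zero_le_one).subset).intervalIntegrable

lemma absolutelyContinuousOnInterval_quantileUtility (hQac : AbsolutelyContinuousOnInterval Q 0 1)
    (v : ℝ) : AbsolutelyContinuousOnInterval (quantileUtility F Q v) 0 1 :=
  ((contDiff_const.sub contDiff_id).comp_absolutelyContinuousOnInterval hQac).mul
    (Real.contDiff_exp.comp_absolutelyContinuousOnInterval
      ((intervalIntegrable_hstarIntegrand hF hQ hQ1).absolutelyContinuousOnInterval_intervalIntegral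
        right_mem_uIcc))

lemma ae_deriv_quantileUtility
    (hode : ∀ᵐ t, t ∈ Iu → HasDerivAt Q ((qinv F t - Q t) / (1 - cdf01 F (Q t))) t) (v : ℝ) :
    ∀ᵐ t, t ∈ Iu → deriv (quantileUtility F Q v) t =
      Real.exp (∫ u in (1 : ℝ)..t, hstarIntegrand F Q u) * hstarIntegrand F Q t * (v - qinv F t) := by
  filter_upwards [hode, (intervalIntegrable_hstarIntegrand hF hQ hQ1).ae_hasDerivAt_integral]
    with t hQt hWt ht
  have hW := hWt (by rwa [uIcc_of_le zero_le_one]) 1 right_mem_uIcc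
  refine (((hQt ht).const_sub v).mul hW.exp).deriv.trans ?_
  unfold hstarIntegrand
  ring

lemma quantileUtility_le_of_qinv_eq (hQac : AbsolutelyContinuousOnInterval Q 0 1)
    (hode : ∀ᵐ t, t ∈ Iu → HasDerivAt Q ((qinv F t - Q t) / (1 - cdf01 F (Q t))) t)
    {v y t : ℝ} (hy : y ∈ Iu) (hqy : qinv F y = v) (ht : t ∈ Iu) :
    quantileUtility F Q v t ≤ quantileUtility F Q v y := by
  have hφ := absolutelyContinuousOnInterval_quantileUtility hF hQ hQ1 hQac v
  have hIu : uIcc 0 1 = Iu := uIcc_of_le zero_le_one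
  have hφ' : AbsolutelyContinuousOnInterval (quantileUtility F Q v) t y :=
    hφ.mono (uIcc_subset_uIcc (hIu ▸ ht) (hIu ▸ hy))
  have hsign : ∀ᵐ x, x ∈ Iu → deriv (quantileUtility F Q v) x = _ :=
    ae_deriv_quantileUtility hF hQ hQ1 hode v
  have hfactor : ∀ x ∈ Iu,
      0 ≤ Real.exp (∫ u in (1 : ℝ)..x, hstarIntegrand F Q u) * hstarIntegrand F Q x :=
    fun x hx => mul_nonneg (Real.exp_pos _).le (one_div_pos.2 (one_sub_cdf01_pos hF hQ hQ1 hx)).le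
  rcases le_total t y with hty | hyt
  · refine hφ'.le_of_ae_deriv_nonneg hty (hsign.mono fun x hx hxI => ?_)
    have hxIu : x ∈ Iu := ⟨ht.1.trans hxI.1, hxI.2.trans hy.2⟩
    rw [hx hxIu]
    exact mul_nonneg (hfactor x hxIu) (sub_nonneg.2 (hqy ▸ qinv_mono hF hxI.2 hy.2))
  · refine hφ'.symm.ge_of_ae_deriv_nonpos hyt (hsign.mono fun x hx hxI => ?_)
    have hxIu : x ∈ Iu := ⟨hy.1.trans hxI.1, hxI.2.trans ht.2⟩
    rw [hx hxIu]
    exact mul_nonpos_of_nonneg_of_nonpos (hfactor x hxIu)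
      (sub_nonpos.2 (hqy ▸ qinv_mono hF hxI.1 hxIu.2))

end Hstar

lemma AbsContOn01.absolutelyContinuousOnInterval {f : ℝ → ℝ} (hf : AbsContOn01 f) :
    AbsolutelyContinuousOnInterval f 0 1 := by
  obtain ⟨g, hg, hfg⟩ := hf
  refine (((contDiff_const (c := f 0)).add contDiff_id).comp_absolutelyContinuousOnInterval
    (hg.absolutelyContinuousOnInterval_intervalIntegral left_mem_uIcc)).congr fun x hx => ?_
  exact (hfg x (by rwa [uIcc_of_le zero_le_one] at hx)).symm

theorem quantile_bids_optimal_against_Hstar_general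
    (F : Measure ℝ) (hF : IsProbOn F)
    (Q : ℝ → ℝ) (hQac : AbsContOn01 Q) (hQmono : StrictMonoOn Q Iu)
    (hQ0 : Q 0 = 0)
    (hQbd : ∀ y ∈ Set.Ioc (0:ℝ) 1, 0 < Q y ∧ Q y < qinv F y)
    (hode : ∀ᵐ y ∂(volume.restrict Iu),
      HasDerivAt Q ((qinv F y - Q y) / (1 - cdf01 F (Q y))) y) :
    ∀ v ∈ Iu, ∀ y ∈ Iu, qinv F y = v →
      ∀ b ∈ Iu, (v - b) * HstarCDF F Q b ≤ (v - Q y) * HstarCDF F Q (Q y) := by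
  intro v _ y hy hqy b hb
  have h0 : (0 : ℝ) ∈ Iu := ⟨le_rfl, zero_le_one⟩
  have h1 : (1 : ℝ) ∈ Iu := ⟨zero_le_one, le_rfl⟩
  have hQ1 : cdf01 F (Q 1) < 1 := cdf01_lt_one_of_lt_qinv_one hF
    (hQ0 ▸ hQmono.monotoneOn h0 h1 zero_le_one) (hQbd 1 ⟨one_pos, le_rfl⟩).2
  have hQac' := hQac.absolutelyContinuousOnInterval
  have hmax : ∀ t ∈ Iu, quantileUtility F Q v t ≤ quantileUtility F Q v y := fun t ht =>
    quantileUtility_le_of_qinv_eq hF hQmono.monotoneOn hQ1 hQac'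
      ((ae_restrict_iff' measurableSet_Icc).1 hode) hy hqy ht
  rw [HstarCDF_apply_of_mem hQmono hy]
  by_cases hb1 : Q 1 ≤ b
  · have hQ1y := hmax 1 h1
    rw [HstarCDF, if_pos hb1, mul_one]
    simp only [quantileUtility, intervalIntegral.integral_same, Real.exp_zero, mul_one] at hQ1y
    linarith
  · have hQcont : ContinuousOn Q (Icc 0 1) := by
      simpa [uIcc_of_le] using hQac'.continuousOn
    obtain ⟨t, ht, rfl⟩ :=
      intermediate_value_Icc zero_le_one hQcont ⟨hQ0.trans_le hb.1, le_of_not_ge hb1⟩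
    rw [HstarCDF_apply_of_mem hQmono ht]
    exact hmax t ht

/-- Lemma: optimality of `Q*` against `H*`: for every value `v ∈ [0,1]`,
every bid `Q*(y)` with `y ∈ [0,1]` and `F⁻(y) = v` maximizes the expected utility
`b ↦ (v − b)·H*(b)` over bids `b ∈ [0,1]`. -/
theorem quantile_bids_optimal_against_Hstar
    (F : Measure ℝ) (hF : IsProbOn F) (hF0 : F {0} = 0)
    (Q : ℝ → ℝ) (hQac : AbsContOn01 Q) (hQmono : StrictMonoOn Q Iu)
    (hQmaps : MapsTo Q Iu Iu) (hQ0 : Q 0 = 0)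
    (hQbd : ∀ y ∈ Set.Ioc (0:ℝ) 1, 0 < Q y ∧ Q y < qinv F y)
    (hode : ∀ᵐ y ∂(volume.restrict Iu),
      HasDerivAt Q ((qinv F y - Q y) / (1 - cdf01 F (Q y))) y) :
    ∀ v ∈ Iu, ∀ y ∈ Iu, qinv F y = v →
      ∀ b ∈ Iu, (v - b) * HstarCDF F Q b ≤ (v - Q y) * HstarCDF F Q (Q y) :=
  quantile_bids_optimal_against_Hstar_general F hF Q hQac hQmono hQ0 hQbd hode

end FPA
end
end
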